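/- Let λ⁺ > 0 and 0 < r₁ ≤ r₂ < R. Let V : (0,∞) → ℝ be bounded and measurable with V(r) ≥ λ⁺ for r ∈ (0,r₁], V(r) ≥ 0 for r ∈ (0,r₂], V(r) ≤ 0 for r ∈ (r₂,R), and V(r) = 0 for r ≥ R. Let t : (0,∞) → ℝ be continuous, nonnegative and differentiable, and suppose that for every r > 0 one has r²·t'(r) = (1/2)∫₀^r V(s) t(s) s² ds, and that (1/2)∫₀^R V(s) t(s) s² ds ≥ 0. Then t'(r) ≥ 0 for every r > 0; in particular t is monotone nondecreasing on (0,∞). -/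
import Mathlib


open MeasureTheory Real intervalIntegral
open scoped BigOperators

noncomputable section

lemma my_intInt (V t : ℝ → ℝ) (hVmeas : Measurable V) (M : ℝ)
    (hM : ∀ r : ℝ, 0 < r → |V r| ≤ M)
    (ht : ContinuousOn t (Set.Ioi (0:ℝ))) (a b : ℝ) (ha : 0 < a) (hab : a ≤ b) :
    IntervalIntegrable (fun s => V s * t s * s ^ 2) volume a b := by
  obtain ⟨C, hC⟩ := IsCompact.exists_bound_of_continuousOn isCompact_Icc
    (ht.mono (fun x hx => lt_of_lt_of_le ha hx.1))
  rw [intervalIntegrable_iff_integrableOn_Ioc_of_le hab]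
  have hmeasset : MeasurableSet (Set.Ioc a b) := measurableSet_Ioc
  have hsm : AEStronglyMeasurable (fun s => V s * t s * s ^ 2)
      (volume.restrict (Set.Ioc a b)) := by
    refine AEStronglyMeasurable.mul (AEStronglyMeasurable.mul ?_ ?_) ?_
    · exact (hVmeas.aestronglyMeasurable).restrict
    · exact ((ht.mono (fun x hx => lt_trans ha hx.1)).aestronglyMeasurable
        hmeasset)
    · exact (measurable_id.pow_const 2).aestronglyMeasurable.restrict
  refine Integrable.mono' (g := fun _ => M * C * b ^ 2)
    (integrable_const _) hsm ?_
  rw [ae_restrict_iff' hmeasset]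
  filter_upwards with s hs
  have hs0 : 0 < s := lt_of_lt_of_le ha (le_of_lt hs.1)
  have hVs := hM s hs0
  have hts := hC s ⟨le_of_lt hs.1, hs.2⟩
  have hsb : |s| ≤ b := by
    rw [abs_of_pos hs0]; exact hs.2
  have hM0 : 0 ≤ M := le_trans (abs_nonneg _) hVs
  have hC0 : 0 ≤ C := le_trans (norm_nonneg _) hts
  calc ‖V s * t s * s ^ 2‖ = |V s| * ‖t s‖ * |s| ^ 2 := by
        simp [abs_mul, sq_abs]
    _ ≤ M * C * b ^ 2 := by
        apply mul_le_mul (mul_le_mul hVs hts (norm_nonneg _) hM0)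
          (pow_le_pow_left₀ (abs_nonneg _) hsb 2) (by positivity) (by positivity)

/-- the radial zero-energy scattering state of a potential with repulsive core
which changes sign exactly once and has nonnegative scattering length is monotone
nondecreasing. -/
theorem stmt_1 (lamp r₁ r₂ R : ℝ) (hlamp : 0 < lamp)
    (hr₁ : 0 < r₁) (hr₁₂ : r₁ ≤ r₂) (hr₂R : r₂ < R)
    (V : ℝ → ℝ) (hVmeas : Measurable V) (hVbdd : ∃ M : ℝ, ∀ r : ℝ, 0 < r → |V r| ≤ M)
    (hVcore : ∀ r : ℝ, 0 < r → r ≤ r₁ → lamp ≤ V r)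
    (hVpos : ∀ r : ℝ, 0 < r → r ≤ r₂ → 0 ≤ V r)
    (hVneg : ∀ r : ℝ, r₂ < r → r < R → V r ≤ 0)
    (hVzero : ∀ r : ℝ, R ≤ r → V r = 0)
    (t t' : ℝ → ℝ)
    (ht_cont : ContinuousOn t (Set.Ioi (0 : ℝ)))
    (ht_nonneg : ∀ r : ℝ, 0 < r → 0 ≤ t r)
    (ht_deriv : ∀ r : ℝ, 0 < r → HasDerivAt t (t' r) r)
    (hODE : ∀ r : ℝ, 0 < r →
      r ^ 2 * t' r = (1 / 2) * ∫ s in (0:ℝ)..r, V s * t s * s ^ 2)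
    (ha : 0 ≤ (1 / 2) * ∫ s in (0:ℝ)..R, V s * t s * s ^ 2) :
    (∀ r : ℝ, 0 < r → 0 ≤ t' r) ∧ MonotoneOn t (Set.Ioi (0 : ℝ)) := by
  obtain ⟨M, hM⟩ := hVbdd
  set f : ℝ → ℝ := fun s => V s * t s * s ^ 2 with hf
  have haux : ∀ a b : ℝ, 0 < a → a ≤ b → IntervalIntegrable f volume a b :=
    fun a b ha' hab => my_intInt V t hVmeas M hM ht_cont a b ha' hab
  have hr₂0 : 0 < r₂ := lt_of_lt_of_le hr₁ hr₁₂
  have hR0pos : 0 < R := lt_trans hr₂0 hr₂R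
  have hR0 : 0 ≤ ∫ s in (0:ℝ)..R, f s := by linarith
  have h1 : ∀ r : ℝ, 0 < r → 0 ≤ t' r := by
    intro r hr
    have hr2 : (0:ℝ) < r ^ 2 := by positivity
    have hkey : 0 ≤ ∫ s in (0:ℝ)..r, f s := by
      by_cases hInt : IntervalIntegrable f volume 0 R
      · rcases le_or_gt r r₂ with hcase | hcase
        · apply intervalIntegral.integral_nonneg (le_of_lt hr)
          intro u hu
          rcases eq_or_lt_of_le hu.1 with h0 | h0
          · simp [hf, ← h0]
          · exact mul_nonneg (mul_nonneg (hVpos u h0 (le_trans hu.2 hcase))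
              (ht_nonneg u h0)) (sq_nonneg u)
        · rcases le_or_gt r R with hrR | hrR
          · have hInt0r : IntervalIntegrable f volume 0 r := by
              apply hInt.mono_set
              rw [Set.uIcc_of_le hr.le, Set.uIcc_of_le hR0pos.le]
              exact Set.Icc_subset_Icc_right hrR
            have hsplit := intervalIntegral.integral_add_adjacent_intervals
              hInt0r (haux r R hr hrR)
            have htail : (∫ s in r..R, f s) ≤ 0 := by
              have hneg : 0 ≤ ∫ s in r..R, -f s := by
                apply intervalIntegral.integral_nonneg hrR
                intro u hu
                rw [hf]
                rcases eq_or_lt_of_le hu.2 with hR' | hR'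
                · simp [hVzero u (le_of_eq hR'.symm)]
                · have hV := hVneg u (lt_of_lt_of_le hcase hu.1) hR'
                  have ht0 : 0 ≤ t u * u ^ 2 :=
                    mul_nonneg (ht_nonneg u (lt_trans hr₂0 (lt_of_lt_of_le hcase hu.1)))
                      (sq_nonneg u)
                  have : V u * t u * u ^ 2 ≤ 0 := by
                    calc V u * t u * u ^ 2 = V u * (t u * u ^ 2) := by ring
                      _ ≤ 0 := mul_nonpos_iff.2 (Or.inr ⟨hV, ht0⟩)
                  simpa using this
              rw [intervalIntegral.integral_neg] at hneg
              linarith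
            linarith
          · have hIntRr : IntervalIntegrable f volume R r := by
              rw [intervalIntegrable_iff_integrableOn_Ioc_of_le hrR.le]
              refine MeasureTheory.IntegrableOn.congr_fun
                (integrableOn_zero) ?_ measurableSet_Ioc
              intro u hu
              simp [hf, hVzero u hu.1.le]
            have hsplit := intervalIntegral.integral_add_adjacent_intervals
              hInt hIntRr
            have htail : (∫ s in R..r, f s) = 0 := by
              rw [intervalIntegral.integral_congr (g := fun _ => (0:ℝ))
                (fun u hu => by
                  rw [Set.uIcc_of_le hrR.le] at hu
                  simp [hf, hVzero u hu.1])]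
              simp
            linarith
      · have hnot : ¬ IntervalIntegrable f volume 0 r := by
          intro hc
          apply hInt
          rcases le_or_gt r R with h | h
          · exact hc.trans (haux r R hr h)
          · apply hc.mono_set
            rw [Set.uIcc_of_le hr.le, Set.uIcc_of_le hR0pos.le]
            exact Set.Icc_subset_Icc_right h.le
        rw [intervalIntegral.integral_undef hnot]
    have hODEr := hODE r hr
    have hm : 0 ≤ r ^ 2 * t' r := by rw [hODEr]; linarith
    nlinarith [hm, hr2]
  refine ⟨h1, ?_⟩
  apply monotoneOn_of_deriv_nonneg (convex_Ioi 0) ht_cont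
  · rw [interior_Ioi]
    exact fun x hx => (ht_deriv x hx).differentiableAt.differentiableWithinAt
  · rw [interior_Ioi]
    intro x hx
    rw [(ht_deriv x hx).deriv]
    exact h1 x hx

end
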